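/- arXiv:math/9211211 — 10 statements merged into one kernel-verified Lean document; each statement's English description precedes it below -/
import Mathlib

section
/- Let n ≥ 1 and let α = 1/√(n+2). Define γ0 = α/2 − α³/(2(1+α)²), γ2 = 1/(2α) + α/(1+α)², γ4 = 1/(2α(1+α)²). Then for all u ∈ [−1, 1], |u| ≤ γ0 + γ2·u² − γ4·u⁴. -/
/-! The quartic minus `t` factors as `(t - α)² (1 - t) (1 + t + 2α) / (2α (1 + α)²)`: the
constants are chosen so that the quartic touches `t` at `t = α` and meets it at `t = 1`.
All factors are nonnegative for `0 ≤ t ≤ 1`, and the quartic is even in `u`, so `t = |u|`. -/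

lemma quartic_sub_self_eq {α : ℝ} (hα : 0 < α) (t : ℝ) :
    (α / 2 - α ^ 3 / (2 * (1 + α) ^ 2)) + (1 / (2 * α) + α / (1 + α) ^ 2) * t ^ 2
        - 1 / (2 * α * (1 + α) ^ 2) * t ^ 4 - t
      = (t - α) ^ 2 * (1 - t) * (1 + t + 2 * α) / (2 * α * (1 + α) ^ 2) := by
  have : 1 + α ≠ 0 := by positivity
  field_simp
  ring

lemma self_le_quartic {α t : ℝ} (hα : 0 < α) (ht0 : 0 ≤ t) (ht1 : t ≤ 1) :
    t ≤ (α / 2 - α ^ 3 / (2 * (1 + α) ^ 2)) + (1 / (2 * α) + α / (1 + α) ^ 2) * t ^ 2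
        - 1 / (2 * α * (1 + α) ^ 2) * t ^ 4 := by
  have hnonneg : 0 ≤ (t - α) ^ 2 * (1 - t) * (1 + t + 2 * α) / (2 * α * (1 + α) ^ 2) := by
    have : 0 ≤ 1 - t := by linarith
    have : 0 ≤ 1 + t + 2 * α := by linarith
    positivity
  linarith [quartic_sub_self_eq hα t]

theorem stmt_0_general (n : ℕ) (α γ0 γ2 γ4 : ℝ)
    (hα : α = 1 / Real.sqrt (n + 2))
    (h0 : γ0 = α / 2 - α ^ 3 / (2 * (1 + α) ^ 2))
    (h2 : γ2 = 1 / (2 * α) + α / (1 + α) ^ 2)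
    (h4 : γ4 = 1 / (2 * α * (1 + α) ^ 2)) :
    ∀ u ∈ Set.Icc (-1 : ℝ) 1, |u| ≤ γ0 + γ2 * u ^ 2 - γ4 * u ^ 4 := by
  rintro u ⟨hu_lo, hu_hi⟩
  have hα_pos : 0 < α := by rw [hα]; positivity
  subst h0 h2 h4
  have h := self_le_quartic hα_pos (abs_nonneg u) (abs_le.mpr ⟨hu_lo, hu_hi⟩)
  rwa [even_two.pow_abs, (by decide : Even 4).pow_abs] at h

theorem stmt_0 (n : ℕ) (hn : 1 ≤ n) (α γ0 γ2 γ4 : ℝ)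
    (hα : α = 1 / Real.sqrt (n + 2))
    (h0 : γ0 = α / 2 - α ^ 3 / (2 * (1 + α) ^ 2))
    (h2 : γ2 = 1 / (2 * α) + α / (1 + α) ^ 2)
    (h4 : γ4 = 1 / (2 * α * (1 + α) ^ 2)) :
    ∀ u ∈ Set.Icc (-1 : ℝ) 1, |u| ≤ γ0 + γ2 * u ^ 2 - γ4 * u ^ 4 :=
  stmt_0_general n α γ0 γ2 γ4 hα h0 h2 h4
end

section
/- Let n ≥ 1, α = 1/√(n+2), and γ0 = α/2 − α³/(2(1+α)²), γ2 = 1/(2α) + α/(1+α)², γ4 = 1/(2α(1+α)²). For u ∈ [−1,1], equality |u| = γ0 + γ2·u² − γ4·u⁴ holds if and only if |u| = 1 or |u| = α. -/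
/-! The majorant minus `t` factors as `(1 - t) (t - α)² (t + 1 + 2α) / (2α(1 + α)²)`: a simple root
at `t = 1`, a double root at `t = α` (where the majorant touches `|u|`), and a last factor that is
positive for `t ≥ 0`. -/

theorem majorant_sub_eq_factorization {α : ℝ} (hα : 0 < α) (t : ℝ) :
    (α / 2 - α ^ 3 / (2 * (1 + α) ^ 2)) + (1 / (2 * α) + α / (1 + α) ^ 2) * t ^ 2
        - 1 / (2 * α * (1 + α) ^ 2) * t ^ 4 - t =
      (1 - t) * (t - α) ^ 2 * (t + 1 + 2 * α) / (2 * α * (1 + α) ^ 2) := by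
  field_simp
  ring

theorem eq_majorant_iff {α t : ℝ} (hα : 0 < α) (ht : 0 ≤ t) :
    t = (α / 2 - α ^ 3 / (2 * (1 + α) ^ 2)) + (1 / (2 * α) + α / (1 + α) ^ 2) * t ^ 2
        - 1 / (2 * α * (1 + α) ^ 2) * t ^ 4 ↔ t = 1 ∨ t = α := by
  have hlast : t + 1 + 2 * α ≠ 0 := by positivity
  rw [eq_comm, ← sub_eq_zero, majorant_sub_eq_factorization hα, div_eq_zero_iff,
    or_iff_left (by positivity), mul_eq_zero, or_iff_left hlast, mul_eq_zero, sub_eq_zero,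
    pow_eq_zero_iff two_ne_zero, sub_eq_zero, eq_comm]

theorem stmt_1_general (n : ℕ) (α γ0 γ2 γ4 : ℝ)
    (hα : α = 1 / Real.sqrt (n + 2))
    (h0 : γ0 = α / 2 - α ^ 3 / (2 * (1 + α) ^ 2))
    (h2 : γ2 = 1 / (2 * α) + α / (1 + α) ^ 2)
    (h4 : γ4 = 1 / (2 * α * (1 + α) ^ 2))
    (u : ℝ) :
    |u| = γ0 + γ2 * u ^ 2 - γ4 * u ^ 4 ↔ |u| = 1 ∨ |u| = α := by
  have hα0 : 0 < α := hα ▸ by positivity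
  rw [h0, h2, h4, ← sq_abs u, ← (show Even 4 by decide).pow_abs u]
  exact eq_majorant_iff hα0 (abs_nonneg u)

theorem stmt_1 (n : ℕ) (hn : 1 ≤ n) (α γ0 γ2 γ4 : ℝ)
    (hα : α = 1 / Real.sqrt (n + 2))
    (h0 : γ0 = α / 2 - α ^ 3 / (2 * (1 + α) ^ 2))
    (h2 : γ2 = 1 / (2 * α) + α / (1 + α) ^ 2)
    (h4 : γ4 = 1 / (2 * α * (1 + α) ^ 2))
    (u : ℝ) (hu : u ∈ Set.Icc (-1 : ℝ) 1) :
    |u| = γ0 + γ2 * u ^ 2 - γ4 * u ^ 4 ↔ |u| = 1 ∨ |u| = α :=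
  stmt_1_general n α γ0 γ2 γ4 hα h0 h2 h4 u
end

section
/- Let μ be a probability measure on a countable set T, let (z_s)_{s∈T} be unit vectors in ℝⁿ, let ω be the normalized rotation-invariant measure on the sphere S^{n−1} ⊂ ℝⁿ, and let k be an even positive integer. Then Σ_{s,t∈T} |⟨z_s, z_t⟩|^k μ_s μ_t ≥ ∫∫_{S^{n−1}×S^{n−1}} |⟨z, w⟩|^k dω(z) dω(w). -/
open MeasureTheory

/-- The map induced on the unit sphere by a linear isometric equivalence (rotation). -/
noncomputable def sphereMap {n : ℕ}
    (g : EuclideanSpace ℝ (Fin n) ≃ₗᵢ[ℝ] EuclideanSpace ℝ (Fin n))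
    (x : Metric.sphere (0 : EuclideanSpace ℝ (Fin n)) 1) :
    Metric.sphere (0 : EuclideanSpace ℝ (Fin n)) 1 :=
  ⟨g x, by
    rw [mem_sphere_zero_iff_norm, g.norm_map]
    exact mem_sphere_zero_iff_norm.mp x.2⟩

open Finset

noncomputable def Pm {n : ℕ} {k : ℕ} (m : Fin k → Fin n) (x : EuclideanSpace ℝ (Fin n)) : ℝ :=
  ∏ i, x (m i)

lemma inner_pow_eq {n k : ℕ} (x y : EuclideanSpace ℝ (Fin n)) :
    (inner ℝ x y : ℝ) ^ k = ∑ m : Fin k → Fin n, Pm m x * Pm m y := by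
  have : (inner ℝ x y : ℝ) = ∑ j, x j * y j := by
    simp [PiLp.inner_apply, RCLike.inner_apply, mul_comm]
  rw [this, Finset.sum_pow']
  rw [Fintype.piFinset_univ]
  refine Finset.sum_congr rfl fun m _ => ?_
  rw [Pm, Pm, ← Finset.prod_mul_distrib]

lemma abs_apply_le {n : ℕ} (x : EuclideanSpace ℝ (Fin n)) (j : Fin n) : |x j| ≤ ‖x‖ := by
  have h := abs_real_inner_le_norm (EuclideanSpace.single j (1:ℝ)) x
  simpa [EuclideanSpace.inner_single_left, EuclideanSpace.norm_single] using h

lemma abs_Pm_le_one {n k : ℕ} (m : Fin k → Fin n) (x : EuclideanSpace ℝ (Fin n))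
    (hx : ‖x‖ = 1) : |Pm m x| ≤ 1 := by
  rw [Pm, Finset.abs_prod]
  calc ∏ i, |x (m i)| ≤ ∏ _i : Fin k, (1:ℝ) :=
        Finset.prod_le_prod (fun i _ => abs_nonneg _) (fun i _ => hx ▸ abs_apply_le x (m i))
    _ = 1 := by simp

lemma Pm_continuous {n k : ℕ} (m : Fin k → Fin n) :
    Continuous fun v : Metric.sphere (0 : EuclideanSpace ℝ (Fin n)) 1 =>
      Pm m (v : EuclideanSpace ℝ (Fin n)) := by
  refine continuous_finset_prod _ fun i _ => ?_
  exact ((EuclideanSpace.proj (m i) : EuclideanSpace ℝ (Fin n) →L[ℝ] ℝ).continuous).comp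
    continuous_subtype_val

lemma sphereMap_continuous {n : ℕ}
    (g : EuclideanSpace ℝ (Fin n) ≃ₗᵢ[ℝ] EuclideanSpace ℝ (Fin n)) :
    Continuous (sphereMap g) := by
  refine Continuous.subtype_mk ?_ _
  exact g.continuous.comp continuous_subtype_val

section
variable {n : ℕ} (ω : Measure (Metric.sphere (0 : EuclideanSpace ℝ (Fin n)) 1))

lemma integral_rot
    (hrot : ∀ g : EuclideanSpace ℝ (Fin n) ≃ₗᵢ[ℝ] EuclideanSpace ℝ (Fin n),
      Measure.map (sphereMap g) ω = ω)
    (k : ℕ) (x y : EuclideanSpace ℝ (Fin n)) (hx : ‖x‖ = 1) (hy : ‖y‖ = 1) :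
    ∫ w, (inner ℝ x (w : EuclideanSpace ℝ (Fin n)) : ℝ) ^ k ∂ω
      = ∫ w, (inner ℝ y (w : EuclideanSpace ℝ (Fin n)) : ℝ) ^ k ∂ω := by
  set g := Submodule.reflection (ℝ ∙ (y - x))ᗮ with hg
  have hgx : g y = x := Submodule.reflection_sub (by rw [hx, hy])
  have hmeas : AEStronglyMeasurable
      (fun w : Metric.sphere (0 : EuclideanSpace ℝ (Fin n)) 1 =>
        (inner ℝ x (w : EuclideanSpace ℝ (Fin n)) : ℝ) ^ k) ω := by
    refine Continuous.aestronglyMeasurable ?_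
    exact (((innerSL ℝ x).continuous).comp continuous_subtype_val).pow k
  calc ∫ w, (inner ℝ x (w : EuclideanSpace ℝ (Fin n)) : ℝ) ^ k ∂ω
      = ∫ w, (inner ℝ x (w : EuclideanSpace ℝ (Fin n)) : ℝ) ^ k
          ∂(Measure.map (sphereMap g) ω) := by rw [hrot g]
    _ = ∫ w, (inner ℝ x ((sphereMap g w : EuclideanSpace ℝ (Fin n))) : ℝ) ^ k ∂ω := by
        rw [integral_map (sphereMap_continuous g).aemeasurable (by rwa [hrot g])]
    _ = ∫ w, (inner ℝ y (w : EuclideanSpace ℝ (Fin n)) : ℝ) ^ k ∂ω := by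
        refine integral_congr_ae (Filter.Eventually.of_forall fun w => ?_)
        have h1 : ((sphereMap g w : EuclideanSpace ℝ (Fin n)))
            = g (w : EuclideanSpace ℝ (Fin n)) := rfl
        simp only [h1, ← hgx, g.inner_map_map]
end

theorem stmt_4 (n : ℕ) (T : Type*) [Countable T]
    (μ : T → ℝ) (hμ0 : ∀ s, 0 ≤ μ s) (hμ1 : ∑' s, μ s = 1)
    (z : T → EuclideanSpace ℝ (Fin n)) (hz : ∀ s, ‖z s‖ = 1)
    (ω : Measure (Metric.sphere (0 : EuclideanSpace ℝ (Fin n)) 1))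
    [IsProbabilityMeasure ω]
    (hrot : ∀ g : EuclideanSpace ℝ (Fin n) ≃ₗᵢ[ℝ] EuclideanSpace ℝ (Fin n),
      Measure.map (sphereMap g) ω = ω)
    (k : ℕ) (hk : 0 < k) (hke : Even k) :
    ∑' p : T × T, |(inner ℝ (z p.1) (z p.2) : ℝ)| ^ k * μ p.1 * μ p.2
      ≥ ∫ v, ∫ w,
          |(inner ℝ (v : EuclideanSpace ℝ (Fin n)) (w : EuclideanSpace ℝ (Fin n)) : ℝ)| ^ k
          ∂ω ∂ω := by
  classical
  -- Basic setup
  have hμsum : Summable μ := by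
    by_contra h
    rw [tsum_eq_zero_of_not_summable h] at hμ1
    norm_num at hμ1
  have hT : Nonempty T := by
    by_contra h
    have : IsEmpty T := not_nonempty_iff.mp h
    rw [tsum_empty] at hμ1
    norm_num at hμ1
  obtain ⟨t₀⟩ := hT
  -- remove absolute values
  simp only [hke.pow_abs]
  haveI : IsFiniteMeasureOnCompacts ω := ⟨fun _K _hK => measure_lt_top ω _⟩
  -- coefficient functions
  set g : (Fin k → Fin n) → T → ℝ := fun m s => μ s * Pm m (z s) with hgdef
  set A : (Fin k → Fin n) → ℝ := fun m => ∑' s, g m s with hAdef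
  set B : (Fin k → Fin n) → ℝ := fun m => ∫ v : Metric.sphere (0 : EuclideanSpace ℝ (Fin n)) 1, Pm m (v : EuclideanSpace ℝ (Fin n)) ∂ω
    with hBdef
  have hgabs : ∀ m, ∀ s, |g m s| ≤ μ s := by
    intro m s
    rw [hgdef, abs_mul, abs_of_nonneg (hμ0 s)]
    calc μ s * |Pm m (z s)| ≤ μ s * 1 :=
          mul_le_mul_of_nonneg_left (abs_Pm_le_one m (z s) (hz s)) (hμ0 s)
      _ = μ s := mul_one _
  have hgsumabs : ∀ m, Summable fun s => |g m s| := fun m =>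
    Summable.of_nonneg_of_le (fun s => abs_nonneg _) (hgabs m) hμsum
  have hgsum : ∀ m, Summable (g m) := fun m => (summable_abs_iff).mp (hgsumabs m)
  -- integrability of the monomials
  have hintP : ∀ m : Fin k → Fin n,
      Integrable (fun v : Metric.sphere (0 : EuclideanSpace ℝ (Fin n)) 1 => Pm m (v : EuclideanSpace ℝ (Fin n))) ω := fun m =>
    (Pm_continuous m).integrable_of_hasCompactSupport (HasCompactSupport.of_compactSpace _)
  -- the inner-product integral as finite sum
  have hIexp : ∀ x : EuclideanSpace ℝ (Fin n),
      ∫ w : Metric.sphere (0 : EuclideanSpace ℝ (Fin n)) 1, (inner ℝ x (w : EuclideanSpace ℝ (Fin n)) : ℝ) ^ k ∂ω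
        = ∑ m : Fin k → Fin n, Pm m x * B m := by
    intro x
    have : (fun w : Metric.sphere (0 : EuclideanSpace ℝ (Fin n)) 1 => (inner ℝ x (w : EuclideanSpace ℝ (Fin n)) : ℝ) ^ k)
        = fun w : Metric.sphere (0 : EuclideanSpace ℝ (Fin n)) 1 => ∑ m : Fin k → Fin n,
            Pm m x * Pm m (w : EuclideanSpace ℝ (Fin n)) := by
      funext w; exact inner_pow_eq x _
    rw [this, integral_finset_sum _ (fun m _ => (hintP m).const_mul _)]
    exact Finset.sum_congr rfl fun m _ => integral_const_mul _ _
  -- constancy of the integral over unit vectors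
  set c : ℝ := ∫ w : Metric.sphere (0 : EuclideanSpace ℝ (Fin n)) 1, (inner ℝ (z t₀) (w : EuclideanSpace ℝ (Fin n)) : ℝ) ^ k ∂ω with hcdef
  have hIconst : ∀ x : EuclideanSpace ℝ (Fin n), ‖x‖ = 1 →
      ∫ w : Metric.sphere (0 : EuclideanSpace ℝ (Fin n)) 1, (inner ℝ x (w : EuclideanSpace ℝ (Fin n)) : ℝ) ^ k ∂ω = c :=
    fun x hx => integral_rot ω hrot k x (z t₀) hx (hz t₀)
  -- RHS equals c
  have hRHS : ∫ v : Metric.sphere (0 : EuclideanSpace ℝ (Fin n)) 1, ∫ w : Metric.sphere (0 : EuclideanSpace ℝ (Fin n)) 1,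
      (inner ℝ (v : EuclideanSpace ℝ (Fin n)) (w : EuclideanSpace ℝ (Fin n)) : ℝ) ^ k ∂ω ∂ω
      = c := by
    have : (fun v : Metric.sphere (0 : EuclideanSpace ℝ (Fin n)) 1 => ∫ w : Metric.sphere (0 : EuclideanSpace ℝ (Fin n)) 1,
        (inner ℝ (v : EuclideanSpace ℝ (Fin n)) (w : EuclideanSpace ℝ (Fin n)) : ℝ) ^ k ∂ω)
        = fun _ : Metric.sphere (0 : EuclideanSpace ℝ (Fin n)) 1 => c := by
      funext v
      exact hIconst _ (mem_sphere_zero_iff_norm.mp v.2)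
    rw [this, integral_const]
    simp
  -- LHS equals ∑ m, A m * A m
  have hterm : ∀ p : T × T,
      (inner ℝ (z p.1) (z p.2) : ℝ) ^ k * μ p.1 * μ p.2
        = ∑ m : Fin k → Fin n, g m p.1 * g m p.2 := by
    intro p
    rw [inner_pow_eq, Finset.sum_mul, Finset.sum_mul]
    exact Finset.sum_congr rfl fun m _ => by rw [hgdef]; ring
  have hsumprod : ∀ m : Fin k → Fin n, Summable fun p : T × T => g m p.1 * g m p.2 := by
    intro m
    exact summable_mul_of_summable_norm (f := g m) (g := g m)
      (by simpa using hgsumabs m) (by simpa using hgsumabs m)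
  have hLHS : ∑' p : T × T, (inner ℝ (z p.1) (z p.2) : ℝ) ^ k * μ p.1 * μ p.2
      = ∑ m : Fin k → Fin n, A m * A m := by
    calc ∑' p : T × T, (inner ℝ (z p.1) (z p.2) : ℝ) ^ k * μ p.1 * μ p.2
        = ∑' p : T × T, ∑ m : Fin k → Fin n, g m p.1 * g m p.2 := by
          exact tsum_congr hterm
      _ = ∑ m : Fin k → Fin n, ∑' p : T × T, g m p.1 * g m p.2 :=
          Summable.tsum_finsetSum fun m _ => hsumprod m
      _ = ∑ m : Fin k → Fin n, A m * A m := by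
          refine Finset.sum_congr rfl fun m _ => ?_
          rw [hAdef]
          exact (tsum_mul_tsum_of_summable_norm (by simpa using hgsumabs m)
            (by simpa using hgsumabs m)).symm
  -- cross term: ∑ m, A m * B m = c
  have hcross : ∑ m : Fin k → Fin n, A m * B m = c := by
    calc ∑ m : Fin k → Fin n, A m * B m
        = ∑ m : Fin k → Fin n, ∑' s, g m s * B m := by
          refine Finset.sum_congr rfl fun m _ => ?_
          rw [hAdef, tsum_mul_right]
      _ = ∑' s, ∑ m : Fin k → Fin n, g m s * B m :=
          (Summable.tsum_finsetSum fun m _ => (hgsum m).mul_right _).symm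
      _ = ∑' s, μ s * c := by
          refine tsum_congr fun s => ?_
          have : ∑ m : Fin k → Fin n, g m s * B m
              = μ s * ∑ m : Fin k → Fin n, Pm m (z s) * B m := by
            rw [Finset.mul_sum]
            exact Finset.sum_congr rfl fun m _ => by rw [hgdef]; ring
          rw [this, ← hIexp, hIconst _ (hz s)]
      _ = c := by rw [tsum_mul_right, hμ1, one_mul]
  -- ∑ m, B m * B m = c
  have hBB : ∑ m : Fin k → Fin n, B m * B m = c := by
    calc ∑ m : Fin k → Fin n, B m * B m
        = ∑ m : Fin k → Fin n, ∫ v : Metric.sphere (0 : EuclideanSpace ℝ (Fin n)) 1,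
            Pm m (v : EuclideanSpace ℝ (Fin n)) * B m ∂ω := by
          refine Finset.sum_congr rfl fun m _ => ?_
          rw [hBdef]
          exact (integral_mul_const _ _).symm
      _ = ∫ v : Metric.sphere (0 : EuclideanSpace ℝ (Fin n)) 1, ∑ m : Fin k → Fin n,
            Pm m (v : EuclideanSpace ℝ (Fin n)) * B m ∂ω :=
          (integral_finset_sum _ fun m _ => (hintP m).mul_const _).symm
      _ = ∫ _v : Metric.sphere (0 : EuclideanSpace ℝ (Fin n)) 1, c ∂ω := by
          refine integral_congr_ae (Filter.Eventually.of_forall fun v => ?_)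
          show ∑ m : Fin k → Fin n, Pm m (v : EuclideanSpace ℝ (Fin n)) * B m = c
          rw [← hIexp, hIconst _ (mem_sphere_zero_iff_norm.mp v.2)]
      _ = c := by rw [integral_const]; simp
  -- positivity
  have hpos : 0 ≤ ∑ m : Fin k → Fin n, (A m - B m) ^ 2 :=
    Finset.sum_nonneg fun m _ => sq_nonneg _
  have hexpand : ∑ m : Fin k → Fin n, (A m - B m) ^ 2
      = (∑ m : Fin k → Fin n, A m * A m) - 2 * (∑ m : Fin k → Fin n, A m * B m)
        + (∑ m : Fin k → Fin n, B m * B m) := by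
    rw [Finset.mul_sum, ← Finset.sum_sub_distrib, ← Finset.sum_add_distrib]
    exact Finset.sum_congr rfl fun m _ => by ring
  rw [hLHS, hRHS]
  have := hexpand ▸ hpos
  rw [hcross, hBB] at this
  linarith
end

section
/- If x₁, …, x_N are unit vectors in ℝⁿ such that |⟨x_i, x_j⟩| = α for all i ≠ j, for some constant 0 ≤ α < 1, then N ≤ n(n+1)/2. -/
theorem stmt_7 (n N : ℕ) (x : Fin N → EuclideanSpace ℝ (Fin n)) (α : ℝ)
    (hα0 : 0 ≤ α) (hα1 : α < 1)
    (hnorm : ∀ i, ‖x i‖ = 1)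
    (hang : ∀ i j, i ≠ j → |(inner ℝ (x i) (x j) : ℝ)| = α) :
    N ≤ n * (n + 1) / 2 := by
  classical
  set v : Fin N → (Sym2 (Fin n) → ℝ) := fun i p =>
    Sym2.lift ⟨fun k l => x i k * x i l, fun k l => mul_comm _ _⟩ p with hv
  have hli : LinearIndependent ℝ v := by
    rw [Fintype.linearIndependent_iff]
    intro c hc i₀
    have hN : (1 : ℝ) ≤ N := by
      have : 0 < N := i₀.pos
      exact_mod_cast this
    have hent : ∀ k l : Fin n, ∑ i, c i * (x i k * x i l) = 0 := by
      intro k l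
      have := congrFun hc s(k, l)
      simpa [hv] using this
    have key : ∀ j, ∑ i, c i * (inner ℝ (x i) (x j) : ℝ) ^ 2 = 0 := by
      intro j
      have hinner : ∀ i, (inner ℝ (x i) (x j) : ℝ) = ∑ k, x i k * x j k := by
        intro i
        simp [PiLp.inner_apply, RCLike.inner_apply, conj_trivial, mul_comm]
      calc ∑ i, c i * (inner ℝ (x i) (x j) : ℝ) ^ 2
          = ∑ i, ∑ k, ∑ l, c i * ((x i k * x i l) * (x j k * x j l)) := by
            refine Finset.sum_congr rfl fun i _ => ?_
            rw [hinner, sq, Finset.sum_mul_sum, Finset.mul_sum]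
            refine Finset.sum_congr rfl fun k _ => ?_
            rw [Finset.mul_sum]
            refine Finset.sum_congr rfl fun l _ => ?_
            ring
        _ = ∑ k, ∑ l, ∑ i, c i * ((x i k * x i l) * (x j k * x j l)) := by
            rw [Finset.sum_comm]
            exact Finset.sum_congr rfl fun k _ => Finset.sum_comm
        _ = 0 := by
            refine Finset.sum_eq_zero fun k _ => Finset.sum_eq_zero fun l _ => ?_
            have h : ∑ i, c i * ((x i k * x i l) * (x j k * x j l))
                = (∑ i, c i * (x i k * x i l)) * (x j k * x j l) := by
              rw [Finset.sum_mul]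
              exact Finset.sum_congr rfl fun i _ => by ring
            rw [h, hent k l, zero_mul]
    set S := ∑ i, c i with hS
    have heq : ∀ j, c j + α ^ 2 * (S - c j) = 0 := by
      intro j
      have h1 : (inner ℝ (x j) (x j) : ℝ) = 1 := by
        rw [real_inner_self_eq_norm_sq, hnorm j, one_pow]
      have h2 : ∀ i, i ≠ j → (inner ℝ (x i) (x j) : ℝ) ^ 2 = α ^ 2 := by
        intro i hij
        rw [← sq_abs, hang i j hij]
      have hsplit := key j
      rw [← Finset.add_sum_erase _ _ (Finset.mem_univ j), h1, one_pow, mul_one] at hsplit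
      have hrest : ∑ i ∈ Finset.univ.erase j, c i * (inner ℝ (x i) (x j) : ℝ) ^ 2
          = α ^ 2 * (S - c j) := by
        have h3 : ∑ i ∈ Finset.univ.erase j, c i * (inner ℝ (x i) (x j) : ℝ) ^ 2
            = ∑ i ∈ Finset.univ.erase j, c i * α ^ 2 := by
          refine Finset.sum_congr rfl fun i hi => ?_
          rw [h2 i (Finset.mem_erase.mp hi).1]
        rw [h3, ← Finset.sum_mul, Finset.sum_erase_eq_sub (Finset.mem_univ j)]
        ring
      rw [hrest] at hsplit
      exact hsplit
    have hsum : S + α ^ 2 * ((N : ℝ) * S - S) = 0 := by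
      have h := Finset.sum_eq_zero fun j (_ : j ∈ (Finset.univ : Finset (Fin N))) => heq j
      rw [Finset.sum_add_distrib, ← Finset.mul_sum, Finset.sum_sub_distrib,
        Finset.sum_const, Finset.card_univ, Fintype.card_fin, nsmul_eq_mul, ← hS] at h
      exact h
    have hS0 : S = 0 := by
      have hfac : S * (1 + α ^ 2 * ((N : ℝ) - 1)) = 0 := by linarith [hsum]
      have hpos : 0 < 1 + α ^ 2 * ((N : ℝ) - 1) := by nlinarith [sq_nonneg α]
      rcases mul_eq_zero.mp hfac with h | h
      · exact h
      · linarith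
    have := heq i₀
    rw [hS0] at this
    have hfac : c i₀ * (1 - α ^ 2) = 0 := by linarith
    have hpos : 0 < 1 - α ^ 2 := by nlinarith
    rcases mul_eq_zero.mp hfac with h | h
    · exact h
    · linarith
  have hcard := hli.fintype_card_le_finrank
  rw [Fintype.card_fin, Module.finrank_pi] at hcard
  rw [Sym2.card, Fintype.card_fin] at hcard
  calc N ≤ (n + 1).choose 2 := hcard
    _ = n * (n + 1) / 2 := by
        rw [Nat.choose_two_right]
        simp [Nat.mul_comm]
end

section
/- If x₁, …, x_N are unit vectors in ℂⁿ such that |⟨x_i, x_j⟩| = α for all i ≠ j, for some constant 0 ≤ α < 1, then N ≤ n². -/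
theorem stmt_8 (n N : ℕ) (x : Fin N → EuclideanSpace ℂ (Fin n)) (α : ℝ)
    (hα0 : 0 ≤ α) (hα1 : α < 1)
    (hnorm : ∀ i, ‖x i‖ = 1)
    (hang : ∀ i j, i ≠ j → ‖(inner ℂ (x i) (x j) : ℂ)‖ = α) :
    N ≤ n ^ 2 := by
  classical
  set v : Fin N → EuclideanSpace ℂ (Fin n × Fin n) :=
    fun i => WithLp.toLp 2 (fun pq : Fin n × Fin n => x i pq.1 * (starRingEnd ℂ) (x i pq.2)) with hv
  have hinner : ∀ i j, (inner ℂ (v i) (v j) : ℂ)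
      = (inner ℂ (x i) (x j) : ℂ) * (starRingEnd ℂ) (inner ℂ (x i) (x j) : ℂ) := by
    intro i j
    simp only [PiLp.inner_apply, RCLike.inner_apply, hv, PiLp.toLp_apply, map_sum, map_mul]
    rw [Fintype.sum_prod_type, Finset.sum_mul_sum]
    exact Finset.sum_congr rfl fun p _ => Finset.sum_congr rfl fun q _ => by
      simp [map_mul]; ring
  have hG : ∀ i j, (inner ℂ (v i) (v j) : ℂ) = if i = j then (1 : ℂ) else ((α : ℂ))^2 := by
    intro i j
    rw [hinner, RCLike.mul_conj]
    by_cases hij : i = j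
    · subst hij
      simp [inner_self_eq_norm_sq_to_K, hnorm i]
    · rw [if_neg hij, hang i j hij]
      norm_cast
  have h1α : (0:ℝ) < 1 - α^2 := by nlinarith
  have hli : LinearIndependent ℂ v := by
    rw [Fintype.linearIndependent_iff]
    intro c h
    set S := ∑ i, c i with hS
    have key : ∀ j, (1 - (α:ℂ)^2) * c j + (α:ℂ)^2 * S = 0 := by
      intro j
      have h0 : (inner ℂ (v j) (∑ i, c i • v i) : ℂ) = 0 := by rw [h, inner_zero_right]
      rw [inner_sum] at h0
      simp only [inner_smul_right, hG] at h0
      rw [← h0]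
      rw [show ∑ i, c i * (if j = i then (1:ℂ) else ((α:ℂ))^2)
          = ∑ i, (((α:ℂ))^2 * c i + if i = j then (1 - (α:ℂ)^2) * c i else 0) from
        Finset.sum_congr rfl fun i _ => by
          by_cases hij : i = j
          · subst hij; simp; ring
          · rw [if_neg (Ne.symm hij), if_neg hij]; ring]
      rw [Finset.sum_add_distrib, Finset.sum_ite_eq' Finset.univ j]
      simp [← Finset.mul_sum, hS]
      ring
    have hsum : (1 - (α:ℂ)^2 + (N:ℂ) * (α:ℂ)^2) * S = 0 := by
      have h2 : ∑ j, ((1 - (α:ℂ)^2) * c j + (α:ℂ)^2 * S) = 0 := by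
        simp [key]
      rw [Finset.sum_add_distrib, ← Finset.mul_sum, ← hS, Finset.sum_const,
        Finset.card_univ, Fintype.card_fin] at h2
      rw [← h2]; ring
    have hfac : (1 - (α:ℂ)^2 + (N:ℂ) * (α:ℂ)^2) ≠ 0 := by
      have hpos : (0:ℝ) < 1 - α^2 + (N:ℝ) * α^2 := by
        have : (0:ℝ) ≤ (N:ℝ) * α^2 := mul_nonneg (Nat.cast_nonneg N) (sq_nonneg α)
        linarith
      have : ((1 - α^2 + (N:ℝ) * α^2 : ℝ) : ℂ) ≠ 0 :=
        Complex.ofReal_ne_zero.mpr hpos.ne'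
      convert this using 1
      push_cast; ring
    have hS0 : S = 0 := by
      rcases mul_eq_zero.mp hsum with h' | h'
      · exact absurd h' hfac
      · exact h'
    intro j
    have hj := key j
    rw [hS0, mul_zero, add_zero, mul_eq_zero] at hj
    rcases hj with h' | h'
    · exfalso
      have : ((1 - α^2 : ℝ) : ℂ) = 0 := by rw [← h']; push_cast; ring
      exact h1α.ne' (by exact_mod_cast this)
    · exact h'
  have hcard := hli.fintype_card_le_finrank
  simpa [finrank_euclideanSpace, sq] using hcard
end

section
/- Let μ be a probability measure on a countable set T and let z_s, s ∈ T, be unit vectors in ℝⁿ. If Σ_{s,t} |⟨z_s,z_t⟩|² μ_s μ_t = 1/n, then n·Σ_{s,t} |⟨z_s,z_t⟩| μ_s μ_t ≤ (2 + (n−1)√(n+2))/(n+1). -/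
open scoped BigOperators

variable {n : ℕ}

noncomputable def ww (x : EuclideanSpace ℝ (Fin n)) :
    EuclideanSpace ℝ (Fin n × Fin n × Fin n × Fin n) :=
  WithLp.toLp 2 fun q : Fin n × Fin n × Fin n × Fin n => x q.1 * x q.2.1 * x q.2.2.1 * x q.2.2.2

lemma sum_pow_four (a : Fin n → ℝ) :
    (∑ i, a i)^4 = ∑ i, ∑ j, ∑ k, ∑ l, a i * a j * a k * a l := by
  rw [show (4:ℕ) = 3+1 from rfl, pow_succ, show (3:ℕ) = 2+1 from rfl, pow_succ, sq]
  simp only [Finset.sum_mul, Finset.mul_sum]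
  rw [Finset.sum_comm]
  refine Finset.sum_congr rfl fun i _ => ?_
  rw [Finset.sum_comm]
  refine Finset.sum_congr rfl fun j _ => ?_
  rw [Finset.sum_comm]
  refine Finset.sum_congr rfl fun k _ => ?_
  refine Finset.sum_congr rfl fun l _ => ?_
  ring

lemma inner_ww (x y : EuclideanSpace ℝ (Fin n)) :
    (inner ℝ (ww x) (ww y) : ℝ) = (inner ℝ x y : ℝ)^4 := by
  simp only [PiLp.inner_apply, RCLike.inner_apply, conj_trivial, ww, PiLp.toLp_apply]
  rw [sum_pow_four]
  rw [Fintype.sum_prod_type]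
  congr 1; funext i
  rw [Fintype.sum_prod_type]
  congr 1; funext j
  rw [Fintype.sum_prod_type]
  congr 1; funext k
  congr 1; funext l
  ring

noncomputable def CC (n : ℕ) : EuclideanSpace ℝ (Fin n × Fin n × Fin n × Fin n) :=
  WithLp.toLp 2 fun q : Fin n × Fin n × Fin n × Fin n => (if q.1 = q.2.1 then (1:ℝ) else 0) * (if q.2.2.1 = q.2.2.2 then 1 else 0)
    + (if q.1 = q.2.2.1 then (1:ℝ) else 0) * (if q.2.1 = q.2.2.2 then 1 else 0)
    + (if q.1 = q.2.2.2 then (1:ℝ) else 0) * (if q.2.1 = q.2.2.1 then 1 else 0)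

lemma inner_ww_CC (x : EuclideanSpace ℝ (Fin n)) (hx : ∑ i, x i ^ 2 = 1) :
    (inner ℝ (ww x) (CC n) : ℝ) = 3 := by
  simp only [PiLp.inner_apply, RCLike.inner_apply, conj_trivial, ww, CC, PiLp.toLp_apply]
  simp only [Fintype.sum_prod_type]
  simp only [mul_add, mul_ite, mul_one, mul_zero, add_mul, ite_mul, zero_mul, one_mul, Finset.sum_ite_eq, Finset.sum_ite_eq',
    Finset.mem_univ, if_true, Finset.sum_add_distrib, Finset.sum_ite_irrel,
    Finset.sum_const_zero]
  have h1 : (∑ i, x i * x i) = 1 := by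
    rw [← hx]; exact Finset.sum_congr rfl fun i _ => (sq (x i)).symm
  have key : ∑ i : Fin n, ∑ j : Fin n, (x i * x i) * (x j * x j) = 1 := by
    rw [← Finset.sum_mul_sum, h1, one_mul]
  have e1 : ∑ x_1 : Fin n, ∑ x_2 : Fin n, x x_1 * x x_1 * x x_2 * x x_2
      = ∑ i : Fin n, ∑ j : Fin n, (x i * x i) * (x j * x j) :=
    Finset.sum_congr rfl fun i _ => Finset.sum_congr rfl fun j _ => by ring
  have e2 : ∑ x_1 : Fin n, ∑ x_2 : Fin n, x x_1 * x x_2 * x x_1 * x x_2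
      = ∑ i : Fin n, ∑ j : Fin n, (x i * x i) * (x j * x j) :=
    Finset.sum_congr rfl fun i _ => Finset.sum_congr rfl fun j _ => by ring
  have e3 : ∑ x_1 : Fin n, ∑ x_2 : Fin n, x x_1 * x x_2 * x x_2 * x x_1
      = ∑ i : Fin n, ∑ j : Fin n, (x i * x i) * (x j * x j) :=
    Finset.sum_congr rfl fun i _ => Finset.sum_congr rfl fun j _ => by ring
  rw [e1, e2, e3, key]; norm_num

lemma inner_CC_CC : (inner ℝ (CC n) (CC n) : ℝ) = 3*(n:ℝ)^2 + 6*n := by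
  simp only [PiLp.inner_apply, RCLike.inner_apply, conj_trivial, CC, PiLp.toLp_apply]
  simp only [Fintype.sum_prod_type]
  simp only [add_mul, mul_add, mul_ite, mul_one, mul_zero, ite_mul, zero_mul, one_mul,
    Finset.sum_ite_eq, Finset.sum_ite_eq', Finset.mem_univ, if_true, Finset.sum_add_distrib,
    Finset.sum_const, Finset.card_univ, Fintype.card_fin, nsmul_eq_mul,
    Finset.sum_ite_irrel, Finset.sum_const_zero]
  ring

lemma fourth_moment {T : Type*} [Countable T] {n : ℕ} (hn : 1 ≤ n)
    (μ : T → ℝ) (hμ0 : ∀ s, 0 ≤ μ s) (hμsum : Summable μ) (hμ1 : ∑' s, μ s = 1)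
    (z : T → EuclideanSpace ℝ (Fin n)) (hz : ∀ s, ‖z s‖ = 1) :
    3 / ((n:ℝ) * (n+2)) ≤ ∑' p : T × T,
      |(inner ℝ (z p.1) (z p.2) : ℝ)| ^ 4 * μ p.1 * μ p.2 := by
  have hzi : ∀ s, ∑ i, z s i ^ 2 = 1 := by
    intro s
    have h := real_inner_self_eq_norm_sq (z s)
    rw [hz s, one_pow] at h
    simp only [PiLp.inner_apply, RCLike.inner_apply, conj_trivial] at h
    rw [← h]; exact Finset.sum_congr rfl fun i _ => sq (z s i)
  have hinz : ∀ s t, (inner ℝ (ww (z s)) (ww (z t)) : ℝ) = (inner ℝ (z s) (z t) : ℝ)^4 :=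
    fun s t => inner_ww _ _
  have hw1 : ∀ s, ‖ww (z s)‖ = 1 := by
    intro s
    have h : (inner ℝ (ww (z s)) (ww (z s)) : ℝ) = 1 := by
      rw [hinz s s, real_inner_self_eq_norm_sq, hz s]; norm_num
    rw [real_inner_self_eq_norm_sq] at h
    rw [← Real.sqrt_sq (norm_nonneg _), h, Real.sqrt_one]
  have hNsum : Summable (fun s => μ s • ww (z s)) := by
    refine Summable.of_norm_bounded hμsum fun s => ?_
    rw [norm_smul, hw1 s, mul_one, Real.norm_eq_abs, abs_of_nonneg (hμ0 s)]
  set N : EuclideanSpace ℝ (Fin n × Fin n × Fin n × Fin n) := ∑' s, μ s • ww (z s) with hN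
  have hub : ∀ s t, |(inner ℝ (z s) (z t) : ℝ)| ≤ 1 := by
    intro s t
    calc |(inner ℝ (z s) (z t) : ℝ)| ≤ ‖z s‖ * ‖z t‖ := abs_real_inner_le_norm _ _
    _ = 1 := by rw [hz s, hz t, mul_one]
  have habs4 : ∀ (u : ℝ), |u|^4 = u^4 := by
    intro u
    rw [show (4:ℕ) = 2*2 from rfl, pow_mul, sq_abs, ← pow_mul]
  have hμμ : Summable (fun p : T × T => μ p.1 * μ p.2) :=
    hμsum.mul_of_nonneg hμsum hμ0 hμ0
  have hsum4 : Summable (fun p : T × T => |(inner ℝ (z p.1) (z p.2) : ℝ)|^4 * μ p.1 * μ p.2) := by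
    refine Summable.of_nonneg_of_le
      (fun p => mul_nonneg (mul_nonneg (by positivity) (hμ0 p.1)) (hμ0 p.2)) (fun p => ?_) hμμ
    have := pow_le_one₀ (abs_nonneg _) (hub p.1 p.2) (n := 4)
    calc |(inner ℝ (z p.1) (z p.2) : ℝ)|^4 * μ p.1 * μ p.2
        ≤ 1 * μ p.1 * μ p.2 := by
          apply mul_le_mul_of_nonneg_right _ (hμ0 p.2)
          exact mul_le_mul_of_nonneg_right this (hμ0 p.1)
      _ = μ p.1 * μ p.2 := by ring
  -- inner C N = 3
  have hCN : (inner ℝ (CC n) N : ℝ) = 3 := by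
    have hmap := ContinuousLinearMap.map_tsum (innerSL ℝ (CC n)) hNsum
    simp only [innerSL_apply_apply] at hmap
    rw [← hN] at hmap
    rw [hmap]
    have h3 : ∀ s, (inner ℝ (CC n) (μ s • ww (z s)) : ℝ) = μ s * 3 := by
      intro s
      rw [real_inner_smul_right, real_inner_comm, inner_ww_CC _ (hzi s)]
    rw [tsum_congr h3, tsum_mul_right, hμ1, one_mul]
  have hCC : (inner ℝ (CC n) (CC n) : ℝ) = 3*(n:ℝ)^2 + 6*n := inner_CC_CC
  -- inner N N = Q
  have hNN : (inner ℝ N N : ℝ)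
      = ∑' p : T × T, |(inner ℝ (z p.1) (z p.2) : ℝ)|^4 * μ p.1 * μ p.2 := by
    have hmap := ContinuousLinearMap.map_tsum (innerSL ℝ N) hNsum
    simp only [innerSL_apply_apply] at hmap
    rw [← hN] at hmap
    rw [Summable.tsum_prod' hsum4 (fun b => hsum4.prod_factor b), hmap]
    refine tsum_congr fun s => ?_
    rw [real_inner_smul_right, real_inner_comm (ww (z s)) N]
    have hmap2 := ContinuousLinearMap.map_tsum (innerSL ℝ (ww (z s))) hNsum
    simp only [innerSL_apply_apply] at hmap2
    rw [← hN] at hmap2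
    rw [hmap2, ← tsum_mul_left]
    refine tsum_congr fun t => ?_
    rw [real_inner_smul_right, hinz s t, habs4]
    ring
  have hcs := real_inner_mul_inner_self_le (CC n) N
  rw [hCN, hCC, hNN] at hcs
  have hnpos : (0:ℝ) < (n:ℝ) * (n+2) := by
    have : (1:ℝ) ≤ n := by exact_mod_cast hn
    nlinarith
  rw [div_le_iff₀ hnpos]
  nlinarith [hcs]

lemma poly_bound (s u : ℝ) (hs : 1 ≤ s) (hu : |u| ≤ 1) :
    |u| ≤ (s+2)/(2*(s+1)^2) + (s/2 + s/(s+1)^2) * u^2 - s^3/(2*(s+1)^2) * u^4 := by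
  set v := |u| with hv
  have hv0 : 0 ≤ v := abs_nonneg u
  have h2 : u^2 = v^2 := (sq_abs u).symm
  have h4 : u^4 = v^4 := by
    have h : u^4 = (u^2)^2 := by ring
    rw [h, h2]; ring
  rw [h2, h4]
  have hd : (0:ℝ) < 2*(s+1)^2 := by positivity
  have key : (s+2)/(2*(s+1)^2) + (s/2 + s/(s+1)^2)*v^2 - s^3/(2*(s+1)^2)*v^4 - v
      = (s*v-1)^2*(1-v)*(s*v+s+2)/(2*(s+1)^2) := by
    field_simp
    ring
  have h1 : 0 ≤ (s*v-1)^2*(1-v)*(s*v+s+2) := by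
    have ha : 0 ≤ 1 - v := by linarith
    have hb : 0 ≤ s*v+s+2 := by nlinarith
    exact mul_nonneg (mul_nonneg (sq_nonneg _) ha) hb
  have := div_nonneg h1 hd.le
  linarith [key ▸ this]

theorem stmt_10 (n : ℕ) (hn : 1 ≤ n) (T : Type*) [Countable T]
    (μ : T → ℝ) (hμ0 : ∀ s, 0 ≤ μ s) (hμ1 : ∑' s, μ s = 1)
    (z : T → EuclideanSpace ℝ (Fin n)) (hz : ∀ s, ‖z s‖ = 1)
    (h2 : ∑' p : T × T, |(inner ℝ (z p.1) (z p.2) : ℝ)| ^ 2 * μ p.1 * μ p.2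
            = 1 / (n : ℝ)) :
    (n : ℝ) * ∑' p : T × T, |(inner ℝ (z p.1) (z p.2) : ℝ)| * μ p.1 * μ p.2
      ≤ (2 + ((n : ℝ) - 1) * Real.sqrt (n + 2)) / ((n : ℝ) + 1) := by
  have hn0 : (0:ℝ) < n := by exact_mod_cast hn
  set s : ℝ := Real.sqrt ((n:ℝ) + 2) with hsdef
  have hs2 : s^2 = (n:ℝ) + 2 := Real.sq_sqrt (by positivity)
  have hs0 : 0 ≤ s := Real.sqrt_nonneg _
  have hs1 : 1 ≤ s := by nlinarith
  set A : ℝ := (s+2)/(2*(s+1)^2) with hA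
  set B : ℝ := s/2 + s/(s+1)^2 with hB
  set D : ℝ := s^3/(2*(s+1)^2) with hD
  have hDpos : 0 < D := by rw [hD]; positivity
  have hμsum : Summable μ := by
    by_contra h
    rw [tsum_eq_zero_of_not_summable h] at hμ1
    norm_num at hμ1
  have hμμ : Summable (fun p : T × T => μ p.1 * μ p.2) :=
    hμsum.mul_of_nonneg hμsum hμ0 hμ0
  have htμμ : ∑' p : T × T, μ p.1 * μ p.2 = 1 := by
    rw [Summable.tsum_prod' hμμ (fun b => hμμ.prod_factor b)]
    rw [tsum_congr (fun a : T => by rw [tsum_mul_left, hμ1, mul_one] : ∀ a : T,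
      ∑' t, μ a * μ t = μ a), hμ1]
  have hub : ∀ p : T × T, |(inner ℝ (z p.1) (z p.2) : ℝ)| ≤ 1 := by
    intro p
    calc |(inner ℝ (z p.1) (z p.2) : ℝ)| ≤ ‖z p.1‖ * ‖z p.2‖ := abs_real_inner_le_norm _ _
    _ = 1 := by rw [hz p.1, hz p.2, mul_one]
  have hsumk : ∀ k : ℕ, 1 ≤ k → Summable (fun p : T × T =>
      |(inner ℝ (z p.1) (z p.2) : ℝ)|^k * μ p.1 * μ p.2) := by
    intro k hk
    refine Summable.of_nonneg_of_le
      (fun p => mul_nonneg (mul_nonneg (by positivity) (hμ0 p.1)) (hμ0 p.2)) (fun p => ?_) hμμ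
    have h1 := pow_le_one₀ (abs_nonneg _) (hub p) (n := k)
    calc |(inner ℝ (z p.1) (z p.2) : ℝ)|^k * μ p.1 * μ p.2
        ≤ 1 * μ p.1 * μ p.2 :=
          mul_le_mul_of_nonneg_right (mul_le_mul_of_nonneg_right h1 (hμ0 p.1)) (hμ0 p.2)
      _ = μ p.1 * μ p.2 := by ring
  have hS1 : Summable (fun p : T × T =>
      |(inner ℝ (z p.1) (z p.2) : ℝ)|^1 * μ p.1 * μ p.2) := hsumk 1 le_rfl
  have hS2 : Summable (fun p : T × T =>
      |(inner ℝ (z p.1) (z p.2) : ℝ)|^2 * μ p.1 * μ p.2) := hsumk 2 (by norm_num)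
  have hS4 : Summable (fun p : T × T =>
      |(inner ℝ (z p.1) (z p.2) : ℝ)|^4 * μ p.1 * μ p.2) := hsumk 4 (by norm_num)
  set Q : ℝ := ∑' p : T × T, |(inner ℝ (z p.1) (z p.2) : ℝ)|^4 * μ p.1 * μ p.2 with hQdef
  have hQ : 3 / ((n:ℝ) * ((n:ℝ)+2)) ≤ Q := fourth_moment hn μ hμ0 hμsum hμ1 z hz
  -- the majorant function
  set g : T × T → ℝ := fun p =>
    A * (μ p.1 * μ p.2) + B * (|(inner ℝ (z p.1) (z p.2) : ℝ)|^2 * μ p.1 * μ p.2)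
      - D * (|(inner ℝ (z p.1) (z p.2) : ℝ)|^4 * μ p.1 * μ p.2) with hg
  have hgsum : Summable g := ((hμμ.mul_left A).add (hS2.mul_left B)).sub (hS4.mul_left D)
  have hgval : ∑' p, g p = A + B * (1/(n:ℝ)) - D * Q := by
    rw [hg, Summable.tsum_sub ((hμμ.mul_left A).add (hS2.mul_left B)) (hS4.mul_left D),
      Summable.tsum_add (hμμ.mul_left A) (hS2.mul_left B), tsum_mul_left, tsum_mul_left,
      tsum_mul_left, htμμ, h2, hQdef, mul_one]
  have hpt : ∀ p : T × T, |(inner ℝ (z p.1) (z p.2) : ℝ)| * μ p.1 * μ p.2 ≤ g p := by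
    intro p
    set u : ℝ := (inner ℝ (z p.1) (z p.2) : ℝ) with hu
    have hpb := poly_bound s u hs1 (hub p)
    have hμp : 0 ≤ μ p.1 * μ p.2 := mul_nonneg (hμ0 p.1) (hμ0 p.2)
    have habs2 : |u|^2 = u^2 := sq_abs u
    have habs4 : |u|^4 = u^4 := by
      rw [show (4:ℕ) = 2*2 from rfl, pow_mul, sq_abs, ← pow_mul]
    have : |u| * (μ p.1 * μ p.2) ≤ (A + B * u^2 - D * u^4) * (μ p.1 * μ p.2) :=
      mul_le_mul_of_nonneg_right hpb hμp
    calc |u| * μ p.1 * μ p.2 = |u| * (μ p.1 * μ p.2) := by ring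
      _ ≤ (A + B * u^2 - D * u^4) * (μ p.1 * μ p.2) := this
      _ = g p := by rw [hg]; simp only [← hu]; rw [← habs2, ← habs4]; ring
  have hmain : ∑' p : T × T, |(inner ℝ (z p.1) (z p.2) : ℝ)| * μ p.1 * μ p.2
      ≤ A + B * (1/(n:ℝ)) - D * Q := by
    rw [← hgval]
    refine Summable.tsum_le_tsum hpt ?_ hgsum
    simpa using hS1
  have hfinal : (n:ℝ) * A + B - 3 * D / ((n:ℝ)+2)
      = (2 + ((n:ℝ) - 1) * s) / ((n:ℝ) + 1) := by
    have hncast : (n:ℝ) = s^2 - 2 := by linarith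
    rw [hA, hB, hD, hncast]
    have h1 : s + 1 ≠ 0 := by nlinarith
    have h2 : s^2 - 2 + 2 ≠ 0 := by nlinarith
    have h3 : s^2 - 2 + 1 ≠ 0 := by nlinarith
    field_simp
    ring
  have hQterm : (n:ℝ) * (D * (3 / ((n:ℝ) * ((n:ℝ)+2)))) = 3 * D / ((n:ℝ)+2) := by
    field_simp
  calc (n : ℝ) * ∑' p : T × T, |(inner ℝ (z p.1) (z p.2) : ℝ)| * μ p.1 * μ p.2
      ≤ (n:ℝ) * (A + B * (1/(n:ℝ)) - D * Q) :=
        mul_le_mul_of_nonneg_left hmain hn0.le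
    _ = (n:ℝ) * A + B - (n:ℝ) * (D * Q) := by field_simp
    _ ≤ (n:ℝ) * A + B - 3 * D / ((n:ℝ)+2) := by
        have : (n:ℝ) * (D * (3 / ((n:ℝ) * ((n:ℝ)+2)))) ≤ (n:ℝ) * (D * Q) := by
          apply mul_le_mul_of_nonneg_left _ hn0.le
          exact mul_le_mul_of_nonneg_left hQ hDpos.le
        linarith [hQterm ▸ this]
    _ = (2 + ((n : ℝ) - 1) * s) / ((n : ℝ) + 1) := hfinal
end

section
/- Let N = n(n+1)/2 and let z₁,…,z_N be equiangular unit vectors in ℝⁿ with common angle α = 1/√(n+2). Then n·Σ_{s,t=1}^N |⟨z_s,z_t⟩| (1/N)² = n·α + (n/N)(1−α) = (2 + (n−1)√(n+2))/(n+1). -/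
theorem stmt_12 (n N : ℕ) (hn : 1 ≤ n) (hN : N = n * (n + 1) / 2) (α : ℝ)
    (hα : α = 1 / Real.sqrt (n + 2))
    (z : Fin N → EuclideanSpace ℝ (Fin n)) (hz : ∀ s, ‖z s‖ = 1)
    (hang : ∀ s t, s ≠ t → |(inner ℝ (z s) (z t) : ℝ)| = α) :
    (n : ℝ) * ∑ s, ∑ t, |(inner ℝ (z s) (z t) : ℝ)| * (1 / (N : ℝ)) ^ 2
        = (n : ℝ) * α + ((n : ℝ) / (N : ℝ)) * (1 - α) ∧
    (n : ℝ) * α + ((n : ℝ) / (N : ℝ)) * (1 - α)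
        = (2 + ((n : ℝ) - 1) * Real.sqrt (n + 2)) / ((n : ℝ) + 1) := by
  have h2N : 2 * N = n * (n + 1) := by
    rw [hN]; exact Nat.mul_div_cancel' (even_iff_two_dvd.mp (Nat.even_mul_succ_self n))
  have hN1 : 1 ≤ N := by nlinarith
  have hNR : (0:ℝ) < (N:ℝ) := by exact_mod_cast hN1
  have hnR : (1:ℝ) ≤ (n:ℝ) := by exact_mod_cast hn
  have h2NR : (2:ℝ) * N = n * (n + 1) := by exact_mod_cast h2N
  have hs0 : 0 < Real.sqrt (n + 2) := Real.sqrt_pos.mpr (by positivity)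
  have hs2 : Real.sqrt (n + 2) ^ 2 = (n:ℝ) + 2 := Real.sq_sqrt (by positivity)
  have hsum : ∀ s, ∑ t, |(inner ℝ (z s) (z t) : ℝ)| = 1 + ((N:ℝ) - 1) * α := by
    intro s
    rw [← Finset.add_sum_erase _ _ (Finset.mem_univ s)]
    have h1 : |(inner ℝ (z s) (z s) : ℝ)| = 1 := by
      rw [real_inner_self_eq_norm_sq, hz]; norm_num
    rw [h1, Finset.sum_congr rfl
      (fun t ht => hang s t (Finset.ne_of_mem_erase ht).symm),
      Finset.sum_const, Finset.card_erase_of_mem (Finset.mem_univ s),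
      Finset.card_univ, Fintype.card_fin, nsmul_eq_mul]
    have : ((N - 1 : ℕ) : ℝ) = (N:ℝ) - 1 := by
      have : (1:ℕ) ≤ N := hN1
      push_cast [Nat.cast_sub this]; ring
    rw [this]
  constructor
  · have : ∑ s, ∑ t, |(inner ℝ (z s) (z t) : ℝ)| * (1 / (N : ℝ)) ^ 2
        = (N:ℝ) * ((1 + ((N:ℝ) - 1) * α) * (1 / (N : ℝ)) ^ 2) := by
      simp only [← Finset.sum_mul, hsum, Finset.sum_const, Finset.card_univ,
        Fintype.card_fin, nsmul_eq_mul]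
      ring
    rw [this]
    field_simp
    ring
  · rw [hα]
    have hnN : (n:ℝ) / (N:ℝ) = 2 / ((n:ℝ) + 1) := by
      rw [div_eq_div_iff hNR.ne' (by positivity)]
      linarith [h2NR]
    rw [hnN]
    have hs' : Real.sqrt (n + 2) ≠ 0 := ne_of_gt hs0
    field_simp
    linear_combination (-((n:ℝ) - 1)) * hs2
end

section
/- The 2-dimensional real normed space whose unit ball is the regular hexagon has projection constant 4/3, i.e., the space E ⊂ ℓ∞³ spanned by f₁ = (√2·z_{s,1})_s and f₂ = (√2·z_{s,2})_s, where z₁, z₂, z₃ ∈ ℝ² are three unit vectors at mutual angle 2π/3, admits a projection P: ℓ∞³ → E of norm 4/3 given by the matrix (2/3)(⟨z_s, z_t⟩)_{s,t}. -/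
theorem stmt_14 (z : Fin 3 → EuclideanSpace ℝ (Fin 2))
    (hz : ∀ s, ‖z s‖ = 1)
    (hang : ∀ s t, s ≠ t → (inner ℝ (z s) (z t) : ℝ) = Real.cos (2 * Real.pi / 3))
    (f₁ f₂ : Fin 3 → ℝ)
    (hf₁ : ∀ s, f₁ s = Real.sqrt 2 * z s 0)
    (hf₂ : ∀ s, f₂ s = Real.sqrt 2 * z s 1)
    (P : (Fin 3 → ℝ) → (Fin 3 → ℝ))
    (hP : ∀ x s, P x s = ∑ t, (2 / 3) * (inner ℝ (z s) (z t) : ℝ) * x t) :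
    (∀ x, P (P x) = P x) ∧
    Set.range P = (Submodule.span ℝ {f₁, f₂} : Submodule ℝ (Fin 3 → ℝ)) ∧
    (∀ x, ‖P x‖ ≤ (4 / 3) * ‖x‖) ∧
    (∃ x : Fin 3 → ℝ, ‖x‖ = 1 ∧ ‖P x‖ = 4 / 3) := by
  have hc : Real.cos (2 * Real.pi / 3) = -(1/2) := by
    have h : (2 * Real.pi / 3) = Real.pi - Real.pi / 3 := by ring
    rw [h, Real.cos_pi_sub, Real.cos_pi_div_three]
  have hip : ∀ s t, (inner ℝ (z s) (z t) : ℝ) = z s 0 * z t 0 + z s 1 * z t 1 := by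
    intro s t
    simp [PiLp.inner_apply, RCLike.inner_apply, Fin.sum_univ_two]; ring
  have hin : ∀ s t, (inner ℝ (z s) (z t) : ℝ) = if s = t then 1 else -(1/2) := by
    intro s t
    by_cases h : s = t
    · subst h
      have h1 := real_inner_self_eq_norm_mul_norm (z s)
      rw [hz s] at h1
      simpa using h1
    · rw [hang s t h, hc]; simp [h]
  have hss : ∀ s, z s 0 * z s 0 + z s 1 * z s 1 = 1 := by
    intro s
    have := hin s s
    rw [hip s s] at this
    simpa using this
  have hst : ∀ s t, s ≠ t → z s 0 * z t 0 + z s 1 * z t 1 = -(1/2) := by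
    intro s t h
    have := hin s t
    rw [hip s t] at this
    simpa [h] using this
  have key : ∀ x s, P x s = x s - (1/3) * (x 0 + x 1 + x 2) := by
    intro x s
    rw [hP x s, Fin.sum_univ_three, hin s 0, hin s 1, hin s 2]
    fin_cases s <;> simp [Fin.ext_iff] <;> ring
  have hzero : (z 0 0 + z 1 0 + z 2 0 = 0) ∧ (z 0 1 + z 1 1 + z 2 1 = 0) := by
    have e : (z 0 0 + z 1 0 + z 2 0)^2 + (z 0 1 + z 1 1 + z 2 1)^2 = 0 := by
      linear_combination hss 0 + hss 1 + hss 2 + 2 * hst 0 1 (by decide) +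
        2 * hst 0 2 (by decide) + 2 * hst 1 2 (by decide)
    constructor <;>
      nlinarith [sq_nonneg (z 0 0 + z 1 0 + z 2 0), sq_nonneg (z 0 1 + z 1 1 + z 2 1)]
  have Pfix : ∀ y : Fin 3 → ℝ, y 0 + y 1 + y 2 = 0 → P y = y := by
    intro y hy
    funext s
    rw [key y s, hy]
    ring
  have h2 : Real.sqrt 2 * Real.sqrt 2 = 2 := Real.mul_self_sqrt (by norm_num)
  refine ⟨?_, ?_, ?_, ?_⟩
  · intro x
    funext s
    rw [key (P x) s, key x s, key x 0, key x 1, key x 2]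
    ring
  · apply Set.eq_of_subset_of_subset
    · rintro y ⟨x, rfl⟩
      have hx : P x = ((Real.sqrt 2 / 3) * (x 0 * z 0 0 + x 1 * z 1 0 + x 2 * z 2 0)) • f₁
          + ((Real.sqrt 2 / 3) * (x 0 * z 0 1 + x 1 * z 1 1 + x 2 * z 2 1)) • f₂ := by
        funext s
        simp only [Pi.add_apply, Pi.smul_apply, smul_eq_mul]
        rw [hP x s, Fin.sum_univ_three, hip s 0, hip s 1, hip s 2, hf₁ s, hf₂ s]
        linear_combination (-((x 0 * z 0 0 + x 1 * z 1 0 + x 2 * z 2 0) * z s 0 +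
          (x 0 * z 0 1 + x 1 * z 1 1 + x 2 * z 2 1) * z s 1) / 3) * h2
      rw [hx]
      exact Submodule.add_mem _
        (Submodule.smul_mem _ _ (Submodule.subset_span (by simp)))
        (Submodule.smul_mem _ _ (Submodule.subset_span (by simp)))
    · intro y hy
      rw [SetLike.mem_coe, Submodule.mem_span_pair] at hy
      obtain ⟨a, b, rfl⟩ := hy
      refine ⟨a • f₁ + b • f₂, ?_⟩
      apply Pfix
      simp only [Pi.add_apply, Pi.smul_apply, smul_eq_mul, hf₁, hf₂]
      linear_combination (Real.sqrt 2 * a) * hzero.1 + (Real.sqrt 2 * b) * hzero.2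
  · intro x
    have hb : ∀ i : Fin 3, ‖x i‖ ≤ ‖x‖ := fun i => norm_le_pi_norm x i
    have h0 := hb 0; have h1 := hb 1; have h2' := hb 2
    simp only [Real.norm_eq_abs] at h0 h1 h2'
    rw [abs_le] at h0 h1 h2'
    have hnn : (0:ℝ) ≤ (4/3) * ‖x‖ := by positivity
    rw [pi_norm_le_iff_of_nonneg hnn]
    intro i
    rw [Real.norm_eq_abs, key x i, abs_le]
    fin_cases i <;> constructor <;> simp <;> linarith
  · refine ⟨![1, -1, -1], ?_, ?_⟩
    · apply le_antisymm
      · rw [pi_norm_le_iff_of_nonneg zero_le_one]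
        intro i
        fin_cases i <;> simp
      · have := norm_le_pi_norm ![(1:ℝ), -1, -1] 0
        simpa using this
    · have hPx : P ![1, -1, -1] = ![4/3, -2/3, -2/3] := by
        funext s
        rw [key]
        have e : (![1, -1, -1] : Fin 3 → ℝ) 2 = -1 := rfl
        fin_cases s <;> norm_num [e]
      rw [hPx]
      apply le_antisymm
      · rw [pi_norm_le_iff_of_nonneg (by norm_num : (0:ℝ) ≤ 4/3)]
        intro i
        fin_cases i <;> simp <;> norm_num
      · have := norm_le_pi_norm ![(4:ℝ)/3, -2/3, -2/3] 0
        simpa using this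
end

section
/- Let z₁, …, z₆ ∈ ℝ³ be six equiangular unit vectors with |⟨z_s, z_t⟩| = 1/√5 for s ≠ t (diagonals of the icosahedron). Then the 6×6 matrix P = (1/2)(⟨z_s, z_t⟩)_{s,t} satisfies P² = P, has rank 3, and its maximum absolute row sum equals (1+√5)/2. -/
open Matrix Finset in
theorem stmt_16 (z : Fin 6 → EuclideanSpace ℝ (Fin 3))
    (hz : ∀ s, ‖z s‖ = 1)
    (hang : ∀ s t, s ≠ t → |(inner ℝ (z s) (z t) : ℝ)| = 1 / Real.sqrt 5)
    (P : Matrix (Fin 6) (Fin 6) ℝ)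
    (hP : ∀ s t, P s t = (1 / 2) * (inner ℝ (z s) (z t) : ℝ)) :
    P * P = P ∧ P.rank = 3 ∧
    Finset.univ.sup' Finset.univ_nonempty (fun s => ∑ t, |P s t|)
      = (1 + Real.sqrt 5) / 2 := by
  have hinner : ∀ s, (inner ℝ (z s) (z s) : ℝ) = 1 := fun s => by
    rw [real_inner_self_eq_norm_sq, hz s]; norm_num
  have hsq : ∀ s t, s ≠ t → (inner ℝ (z s) (z t) : ℝ) ^ 2 = 1 / 5 := by
    intro s t h
    rw [← sq_abs, hang s t h, div_pow, one_pow, Real.sq_sqrt (by norm_num)]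
  set Z : Matrix (Fin 3) (Fin 6) ℝ := fun i s => z s i with hZdef
  have hG : ∀ s t, (Zᵀ * Z) s t = (inner ℝ (z s) (z t) : ℝ) := by
    intro s t
    simp [Matrix.mul_apply, hZdef, PiLp.inner_apply, RCLike.inner_apply,
      Matrix.transpose_apply]
    exact (Finset.sum_congr rfl fun x _ => mul_comm ((z s).ofLp x) ((z t).ofLp x) :
      ∑ x : Fin 3, (z s).ofLp x * (z t).ofLp x = ∑ x : Fin 3, (z t).ofLp x * (z s).ofLp x)
  set G : Matrix (Fin 6) (Fin 6) ℝ := Zᵀ * Z with hGdef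
  -- row of squares sums to 2
  have hrowsq : ∀ s : Fin 6, ∑ t, ((inner ℝ (z s) (z t) : ℝ)) ^ 2 = 2 := by
    intro s
    rw [← Finset.add_sum_erase _ _ (Finset.mem_univ s), hinner s]
    have : ∑ t ∈ Finset.univ.erase s, ((inner ℝ (z s) (z t) : ℝ)) ^ 2
        = ∑ t ∈ Finset.univ.erase s, (1 / 5 : ℝ) := by
      refine Finset.sum_congr rfl ?_
      intro t ht
      exact hsq s t (Ne.symm (Finset.ne_of_mem_erase ht))
    rw [this, Finset.sum_const, Finset.card_erase_of_mem (Finset.mem_univ s)]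
    simp
    norm_num
  -- trace of G*G = 12
  have htrGG : (G * G).trace = 12 := by
    have : ∀ s : Fin 6, (G * G) s s = 2 := by
      intro s
      rw [Matrix.mul_apply]
      have : ∀ t : Fin 6, G s t * G t s = ((inner ℝ (z s) (z t) : ℝ)) ^ 2 := by
        intro t
        rw [hG, hG, real_inner_comm (z t) (z s), sq]
      simp_rw [this]
      exact hrowsq s
    rw [Matrix.trace]
    simp_rw [Matrix.diag_apply, this]
    norm_num
  have htrX : (Z * Zᵀ).trace = 6 := by
    rw [Matrix.trace_mul_comm]
    show G.trace = 6
    have : ∀ s : Fin 6, G s s = 1 := fun s => by rw [hG, hinner]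
    rw [Matrix.trace]
    simp_rw [Matrix.diag_apply, this]
    norm_num
  have htrXX : (Z * Zᵀ * (Z * Zᵀ)).trace = 12 := by
    have : Z * Zᵀ * (Z * Zᵀ) = Z * (Zᵀ * Z * Zᵀ) := by
      simp only [Matrix.mul_assoc]
    rw [this, Matrix.trace_mul_comm, Matrix.mul_assoc (Zᵀ * Z) Zᵀ Z]
    exact htrGG
  -- B = ZZᵀ - 2I is zero
  set X : Matrix (Fin 3) (Fin 3) ℝ := Z * Zᵀ with hXdef
  have hXsymm : Xᵀ = X := by
    rw [hXdef, Matrix.transpose_mul, Matrix.transpose_transpose]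
  set B : Matrix (Fin 3) (Fin 3) ℝ := X - (2 : ℝ) • (1 : Matrix (Fin 3) (Fin 3) ℝ) with hBdef
  have hBsymm : ∀ i j, B j i = B i j := by
    intro i j
    have := congrFun (congrFun hXsymm i) j
    simp only [Matrix.transpose_apply] at this
    simp [hBdef, Matrix.sub_apply, Matrix.smul_apply, Matrix.one_apply, this,
      eq_comm (a := i) (b := j)]
  have hBB : B * B = X * X - (4 : ℝ) • X + (4 : ℝ) • (1 : Matrix (Fin 3) (Fin 3) ℝ) := by
    rw [hBdef]
    rw [sub_mul, mul_sub, mul_sub, Matrix.smul_mul, Matrix.mul_smul,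
      Matrix.one_mul, Matrix.mul_one, Matrix.smul_mul, Matrix.one_mul,
      smul_smul]
    module
  have htrBB : (B * B).trace = 0 := by
    rw [hBB, Matrix.trace_add, Matrix.trace_sub, Matrix.trace_smul,
      Matrix.trace_smul, Matrix.trace_one]
    rw [hXdef] at *
    rw [htrXX, htrX]
    norm_num
  have hBzero : B = 0 := by
    have hsum : ∑ i : Fin 3, ∑ j : Fin 3, (B i j) ^ 2 = 0 := by
      have : ∀ i : Fin 3, (B * B) i i = ∑ j, (B i j) ^ 2 := by
        intro i
        rw [Matrix.mul_apply]
        exact Finset.sum_congr rfl fun j _ => by rw [hBsymm i j, sq]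
      calc ∑ i : Fin 3, ∑ j : Fin 3, (B i j) ^ 2
          = ∑ i : Fin 3, (B * B) i i := by
            exact Finset.sum_congr rfl fun i _ => (this i).symm
        _ = (B * B).trace := rfl
        _ = 0 := htrBB
    ext i j
    have h1 : ∀ i ∈ (Finset.univ : Finset (Fin 3)),
        ∑ j : Fin 3, (B i j) ^ 2 = 0 := by
      rw [← Finset.sum_eq_zero_iff_of_nonneg]
      · exact hsum
      · intro i _
        exact Finset.sum_nonneg fun j _ => sq_nonneg _
    have h2 := (Finset.sum_eq_zero_iff_of_nonneg
      (fun j _ => sq_nonneg (B i j))).mp (h1 i (Finset.mem_univ i)) j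
      (Finset.mem_univ j)
    simpa using pow_eq_zero_iff (n := 2) (by norm_num) |>.mp h2
  have hX2 : Z * Zᵀ = (2 : ℝ) • (1 : Matrix (Fin 3) (Fin 3) ℝ) := by
    have := sub_eq_zero.mp hBzero
    exact this
  -- G * G = 2 • G
  have hGG : G * G = (2 : ℝ) • G := by
    calc G * G = Zᵀ * (Z * Zᵀ) * Z := by
          rw [hGdef]; simp only [Matrix.mul_assoc]
      _ = Zᵀ * ((2 : ℝ) • (1 : Matrix (Fin 3) (Fin 3) ℝ)) * Z := by rw [hX2]
      _ = (2 : ℝ) • G := by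
          rw [Matrix.mul_smul, Matrix.mul_one, Matrix.smul_mul, hGdef]
  have hPG : P = (1 / 2 : ℝ) • G := by
    ext s t
    rw [hP s t, Matrix.smul_apply, hG, smul_eq_mul]
  -- part 1
  have part1 : P * P = P := by
    rw [hPG, Matrix.smul_mul, Matrix.mul_smul, hGG, smul_smul, smul_smul]
    norm_num
  -- part 2: rank
  have part2 : P.rank = 3 := by
    set c : ℝ := (Real.sqrt 2)⁻¹ with hcdef
    have hc2 : c * c = 1 / 2 := by
      rw [hcdef, ← mul_inv, Real.mul_self_sqrt (by norm_num)]
      norm_num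
    set W : Matrix (Fin 3) (Fin 6) ℝ := c • Z with hWdef
    have hWtW : Wᵀ * W = P := by
      rw [hWdef, Matrix.transpose_smul, Matrix.smul_mul, Matrix.mul_smul,
        smul_smul, hc2, hPG, hGdef]
    have hWWt : W * Wᵀ = 1 := by
      rw [hWdef, Matrix.transpose_smul, Matrix.smul_mul, Matrix.mul_smul,
        smul_smul, hc2, hX2, smul_smul]
      norm_num
    have h1 : W.rank = 3 := by
      have := Matrix.rank_self_mul_transpose W
      rw [hWWt, Matrix.rank_one] at this
      simpa using this.symm
    rw [← hWtW, Matrix.rank_transpose_mul_self, h1]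
  -- part 3: row sums
  have hrow : ∀ s : Fin 6, ∑ t, |P s t| = (1 + Real.sqrt 5) / 2 := by
    intro s
    have habs : ∀ t, |P s t| = (1 / 2) * |(inner ℝ (z s) (z t) : ℝ)| := by
      intro t
      rw [hP s t, abs_mul]
      norm_num
    simp_rw [habs]
    rw [← Finset.add_sum_erase _ _ (Finset.mem_univ s), hinner s]
    have : ∑ t ∈ Finset.univ.erase s, (1 / 2) * |(inner ℝ (z s) (z t) : ℝ)|
        = ∑ t ∈ Finset.univ.erase s, (1 / 2) * (1 / Real.sqrt 5) := by
      refine Finset.sum_congr rfl fun t ht => ?_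
      rw [hang s t (Ne.symm (Finset.ne_of_mem_erase ht))]
    rw [this, Finset.sum_const, Finset.card_erase_of_mem (Finset.mem_univ s)]
    have h5 : Real.sqrt 5 > 0 := Real.sqrt_pos.mpr (by norm_num)
    have h55 : Real.sqrt 5 * Real.sqrt 5 = 5 := Real.mul_self_sqrt (by norm_num)
    simp only [Finset.card_univ, Fintype.card_fin, abs_one, nsmul_eq_mul]
    push_cast
    field_simp
    nlinarith [h55, h5]
  have part3 : Finset.univ.sup' Finset.univ_nonempty (fun s => ∑ t, |P s t|)
      = (1 + Real.sqrt 5) / 2 := by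
    have : (fun s : Fin 6 => ∑ t, |P s t|)
        = fun _ => (1 + Real.sqrt 5) / 2 := funext hrow
    rw [this, Finset.sup'_const]
  exact ⟨part1, part2, part3⟩
end

section
/- Suppose z₁,…,z_N are unit vectors in ℝⁿ with pairwise inner products satisfying |⟨z_s,z_t⟩| = 1/√(n+2) for s ≠ t, and N = n(n+1)/2. Then Σ_{s=1}^N z_s ⊗ z_s = (N/n)·Id_{ℝⁿ}, i.e., a maximal equiangular system is a tight frame. -/
private lemma quad_swap {α β : Type*} [Fintype α] [Fintype β]
    (f : α → α → β → β → ℝ) :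
    ∑ i : β, ∑ j : β, ∑ s : α, ∑ t : α, f s t i j
      = ∑ s : α, ∑ t : α, ∑ i : β, ∑ j : β, f s t i j := by
  calc ∑ i : β, ∑ j : β, ∑ s : α, ∑ t : α, f s t i j
      = ∑ i : β, ∑ s : α, ∑ j : β, ∑ t : α, f s t i j :=
        Finset.sum_congr rfl fun i _ => Finset.sum_comm
    _ = ∑ s : α, ∑ i : β, ∑ j : β, ∑ t : α, f s t i j := Finset.sum_comm
    _ = ∑ s : α, ∑ i : β, ∑ t : α, ∑ j : β, f s t i j :=
        Finset.sum_congr rfl fun s _ => Finset.sum_congr rfl fun i _ => Finset.sum_comm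
    _ = ∑ s : α, ∑ t : α, ∑ i : β, ∑ j : β, f s t i j :=
        Finset.sum_congr rfl fun s _ => Finset.sum_comm

theorem stmt_17 (n N : ℕ) (hn : 1 ≤ n) (hN : N = n * (n + 1) / 2)
    (z : Fin N → EuclideanSpace ℝ (Fin n)) (hz : ∀ s, ‖z s‖ = 1)
    (hang : ∀ s t, s ≠ t →
      |(inner ℝ (z s) (z t) : ℝ)| = 1 / Real.sqrt (n + 2)) :
    ∀ v : EuclideanSpace ℝ (Fin n),
      ∑ s, (inner ℝ (z s) v : ℝ) • z s = ((N : ℝ) / (n : ℝ)) • v := by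
  have hn0 : (n : ℝ) ≠ 0 := Nat.cast_ne_zero.2 (by omega)
  have hn2 : (n : ℝ) + 2 ≠ 0 := by positivity
  have hN1 : 1 ≤ N := by
    subst hN
    have h2 : 1 * 2 ≤ n * (n + 1) := Nat.mul_le_mul hn (by omega)
    omega
  have h2N : (N : ℝ) * 2 = n * (n + 1) := by
    have : N * 2 = n * (n + 1) := by
      rw [hN]; exact Nat.div_mul_cancel (Nat.even_mul_succ_self n).two_dvd
    exact_mod_cast this
  set c : ℝ := (N : ℝ) / n with hc
  have hinner : ∀ x y : EuclideanSpace ℝ (Fin n),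
      (inner ℝ x y : ℝ) = ∑ i, x i * y i := by
    intro x y
    simp [PiLp.inner_apply, RCLike.inner_apply, conj_trivial, mul_comm]
  set G : Fin N → Fin N → ℝ := fun s t => ∑ i, z s i * z t i with hG
  have hGd : ∀ s, G s s = 1 := by
    intro s
    have h := real_inner_self_eq_norm_sq (z s)
    rw [hinner, hz] at h
    simpa [hG] using h
  have hGo : ∀ s t, s ≠ t → (G s t) ^ 2 = 1 / ((n : ℝ) + 2) := by
    intro s t hst
    have h := hang s t hst
    rw [hinner] at h
    have h2 : (G s t) ^ 2 = (1 / Real.sqrt ((n : ℝ) + 2)) ^ 2 := by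
      rw [← sq_abs, hG]
      push_cast at h ⊢
      rw [h]
    rw [h2, div_pow, one_pow, Real.sq_sqrt (by positivity)]
  set S : Fin n → Fin n → ℝ := fun i j => ∑ s, z s i * z s j with hS
  set A : Fin n → Fin n → ℝ :=
    fun i j => S i j - (if i = j then c else 0) with hA
  -- step: Frobenius expansion of ∑ (S ij)^2
  have T1 : ∑ i, ∑ j, (S i j) ^ 2 = ∑ s, ∑ t, (G s t) ^ 2 := by
    have e1 : ∀ i j : Fin n, (S i j) ^ 2
        = ∑ s, ∑ t, (z s i * z t i) * (z s j * z t j) := by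
      intro i j
      rw [hS, sq, Finset.sum_mul_sum]
      exact Finset.sum_congr rfl fun s _ => Finset.sum_congr rfl fun t _ => by ring
    have e2 : ∀ s t : Fin N, (G s t) ^ 2
        = ∑ i, ∑ j, (z s i * z t i) * (z s j * z t j) := by
      intro s t
      rw [hG, sq, Finset.sum_mul_sum]
    simp_rw [e1, e2]
    exact quad_swap fun s t i j => (z s i * z t i) * (z s j * z t j)
  -- value of the Gram sum
  have T1v : ∑ s, ∑ t, (G s t) ^ 2
      = (N : ℝ) + ((N : ℝ) ^ 2 - N) / ((n : ℝ) + 2) := by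
    have hrow : ∀ s, ∑ t, (G s t) ^ 2
        = 1 + ((N : ℝ) - 1) * (1 / ((n : ℝ) + 2)) := by
      intro s
      rw [← Finset.sum_erase_add _ _ (Finset.mem_univ s), hGd, one_pow]
      have : ∑ t ∈ Finset.univ.erase s, (G s t) ^ 2
          = ∑ t ∈ Finset.univ.erase s, (1 / ((n : ℝ) + 2)) := by
        refine Finset.sum_congr rfl fun t ht => ?_
        exact hGo s t (Ne.symm (Finset.ne_of_mem_erase ht))
      rw [this, Finset.sum_const, Finset.card_erase_of_mem (Finset.mem_univ s),
        Finset.card_univ, Fintype.card_fin, nsmul_eq_mul]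
      rw [Nat.cast_sub hN1]
      push_cast
      ring
    rw [Finset.sum_congr rfl fun s _ => hrow s, Finset.sum_const,
      Finset.card_univ, Fintype.card_fin, nsmul_eq_mul]
    ring
  -- trace
  have Ttr : ∑ i, S i i = (N : ℝ) := by
    have : ∑ i : Fin n, ∑ s : Fin N, z s i * z s i
        = ∑ s : Fin N, ∑ i : Fin n, z s i * z s i := Finset.sum_comm
    rw [hS]
    simp only []
    rw [this]
    rw [Finset.sum_congr rfl fun s _ => hGd s, Finset.sum_const,
      Finset.card_univ, Fintype.card_fin, nsmul_eq_mul, mul_one]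
  -- Frobenius norm of A is zero
  have hsum : ∑ i, ∑ j, (A i j) ^ 2 = 0 := by
    have hrow : ∀ i, ∑ j, (A i j) ^ 2
        = (∑ j, (S i j) ^ 2) - 2 * c * S i i + c ^ 2 := by
      intro i
      have e : ∀ j, (A i j) ^ 2 = (S i j) ^ 2
          - (if i = j then 2 * c * S i j else 0)
          + (if i = j then c ^ 2 else 0) := by
        intro j
        by_cases h : i = j <;> simp [hA, h] <;> ring_nf
      simp_rw [e]
      rw [Finset.sum_add_distrib, Finset.sum_sub_distrib]
      congr 1
      · congr 1
        simp
      · simp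
    rw [Finset.sum_congr rfl fun i _ => hrow i, Finset.sum_add_distrib,
      Finset.sum_sub_distrib, T1, T1v]
    rw [← Finset.mul_sum, Ttr, Finset.sum_const, Finset.card_univ,
      Fintype.card_fin, nsmul_eq_mul]
    rw [hc]
    field_simp
    ring_nf
    linear_combination (-(N : ℝ)) * h2N
  have hA0 : ∀ i j, A i j = 0 := by
    intro i j
    have h1 : ∀ i ∈ Finset.univ, (0 : ℝ) ≤ ∑ j, (A i j) ^ 2 :=
      fun _ _ => Finset.sum_nonneg fun _ _ => sq_nonneg _
    have h2 := (Finset.sum_eq_zero_iff_of_nonneg h1).1 hsum i (Finset.mem_univ i)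
    have h3 := (Finset.sum_eq_zero_iff_of_nonneg
      (fun _ _ => sq_nonneg _)).1 h2 j (Finset.mem_univ j)
    exact sq_eq_zero_iff.mp h3
  have hSval : ∀ i j, S i j = if i = j then c else 0 := by
    intro i j
    have h : S i j - (if i = j then c else 0) = 0 := hA0 i j
    exact sub_eq_zero.mp h
  intro v
  apply PiLp.ext
  intro i
  have lhs : (∑ s, (inner ℝ (z s) v : ℝ) • z s) i
      = ∑ s, (inner ℝ (z s) v : ℝ) * z s i := by
    have : (∑ s, (inner ℝ (z s) v : ℝ) • z s) i
        = EuclideanSpace.proj (𝕜 := ℝ) i (∑ s, (inner ℝ (z s) v : ℝ) • z s) := rfl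
    rw [this, map_sum]
    simp [smul_eq_mul]
  rw [lhs]
  have rhs : (((N : ℝ) / (n : ℝ)) • v) i = c * v i := rfl
  rw [rhs]
  calc ∑ s, (inner ℝ (z s) v : ℝ) * z s i
      = ∑ s, ∑ j, z s i * z s j * v j := by
        refine Finset.sum_congr rfl fun s _ => ?_
        rw [hinner, Finset.sum_mul]
        exact Finset.sum_congr rfl fun j _ => by ring
    _ = ∑ j, (∑ s, z s i * z s j) * v j := by
        rw [Finset.sum_comm]
        exact Finset.sum_congr rfl fun j _ => by rw [Finset.sum_mul]
    _ = ∑ j, (if i = j then c else 0) * v j := by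
        refine Finset.sum_congr rfl fun j _ => ?_
        rw [← hSval i j]
    _ = c * v i := by
        simp
end
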